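/- arXiv:2510.01180 — 2 statements merged into one kernel-verified Lean document; each statement's English description precedes it below -/
import Mathlib

section
/- Under the one-step RLVR update Δz_j = (η/N) p_j (R_j - S_R), the first-order change of correct-token mass satisfies ΔQ_pos = (η/N)[(R_c - S_R) Q_neg A_2 + (S_R - R_w) Q_pos B_2 + S_R (Q_pos U_{neg,2} - Q_neg U_{pos,2})], where ΔQ_pos = Σ_{i∈𝒫} p_i(Δz_i - Σ_j p_j Δz_j). -/
theorem stmt_8 {V : ℕ} (p : Fin V → ℝ) (hp : ∀ i, 0 ≤ p i) (hsum : ∑ i, p i = 1)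
    (P A B U : Finset (Fin V)) (hA : A ⊆ P) (hB : B ⊆ Pᶜ) (hU : U = (A ∪ B)ᶜ)
    (Rc Rw η N : ℝ) (R : Fin V → ℝ)
    (hRA : ∀ j ∈ A, R j = Rc) (hRB : ∀ j ∈ B, R j = Rw) (hRU : ∀ j ∈ U, R j = 0)
    (SR Qpos Qneg A2 B2 Upos2 Uneg2 : ℝ)
    (hSR : SR = Rc * ∑ j ∈ A, p j + Rw * ∑ j ∈ B, p j)
    (hQpos : Qpos = ∑ i ∈ P, p i) (hQneg : Qneg = 1 - Qpos)
    (hA2 : A2 = ∑ i ∈ A, (p i) ^ 2) (hB2 : B2 = ∑ i ∈ B, (p i) ^ 2)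
    (hUpos : Upos2 = ∑ i ∈ U ∩ P, (p i) ^ 2) (hUneg : Uneg2 = ∑ i ∈ U ∩ Pᶜ, (p i) ^ 2)
    (Δz : Fin V → ℝ) (hΔz : ∀ j, Δz j = η / N * p j * (R j - SR)) :
    ∑ i ∈ P, p i * (Δz i - ∑ j, p j * Δz j)
      = η / N * ((Rc - SR) * Qneg * A2 + (SR - Rw) * Qpos * B2
          + SR * (Qpos * Uneg2 - Qneg * Upos2)) := by
  have hABdisj : Disjoint A B := (disjoint_compl_right).mono hA hB
  -- sum over whole vocab
  set T := ∑ j, p j * Δz j with hT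
  have hUcomp : (A ∪ B)ᶜ = U := hU.symm
  have hSumA : ∑ j ∈ A, p j * Δz j = η / N * ((Rc - SR) * A2) := by
    rw [hA2, Finset.mul_sum, Finset.mul_sum]
    apply Finset.sum_congr rfl
    intro j hj
    rw [hΔz j, hRA j hj]; ring
  have hSumB : ∑ j ∈ B, p j * Δz j = η / N * ((Rw - SR) * B2) := by
    rw [hB2, Finset.mul_sum, Finset.mul_sum]
    apply Finset.sum_congr rfl
    intro j hj
    rw [hΔz j, hRB j hj]; ring
  have hSumU : ∑ j ∈ U, p j * Δz j = η / N * (-SR * (Upos2 + Uneg2)) := by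
    have hsplit : U = (U ∩ P) ∪ (U ∩ Pᶜ) := by
      ext i; simp [Finset.mem_union, Finset.mem_inter]; tauto
    rw [hsplit, Finset.sum_union (by
      simp [Finset.disjoint_left, Finset.mem_inter] at *; tauto)]
    have h1 : ∀ s : Finset (Fin V), s ⊆ U → ∑ j ∈ s, p j * Δz j = η / N * (-SR * ∑ j ∈ s, (p j)^2) := by
      intro s hs
      rw [Finset.mul_sum, Finset.mul_sum]
      apply Finset.sum_congr rfl
      intro j hj
      rw [hΔz j, hRU j (hs hj)]; ring
    rw [h1 _ (Finset.inter_subset_left), h1 _ (Finset.inter_subset_left), ← hUpos, ← hUneg]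
    ring
  have hTotal : T = η / N * ((Rc - SR) * A2 + (Rw - SR) * B2 - SR * (Upos2 + Uneg2)) := by
    rw [hT, ← Finset.sum_add_sum_compl (A ∪ B), hUcomp,
      Finset.sum_union hABdisj, hSumA, hSumB, hSumU]
    ring
  have hPsplit : P = A ∪ (U ∩ P) := by
    ext i
    simp only [Finset.mem_union, Finset.mem_inter, hU, Finset.mem_compl]
    constructor
    · intro hi
      by_cases hiA : i ∈ A
      · exact Or.inl hiA
      · exact Or.inr ⟨by simp [Finset.mem_union]; exact ⟨hiA, fun hiB => by
          have := hB hiB; simp [Finset.mem_compl] at this; exact this hi⟩, hi⟩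
    · rintro (hiA | ⟨_, hi⟩)
      · exact hA hiA
      · exact hi
  have hSumP : ∑ i ∈ P, p i * Δz i = η / N * ((Rc - SR) * A2 - SR * Upos2) := by
    have hdisj : Disjoint A (U ∩ P) := by
      simp only [hU, Finset.disjoint_left, Finset.mem_inter, Finset.mem_compl, Finset.mem_union]
      tauto
    rw [hPsplit, Finset.sum_union hdisj, hSumA]
    have : ∑ j ∈ U ∩ P, p j * Δz j = η / N * (-SR * Upos2) := by
      rw [hUpos, Finset.mul_sum, Finset.mul_sum]
      apply Finset.sum_congr rfl
      intro j hj
      rw [hΔz j, hRU j (Finset.mem_inter.1 hj).1]; ring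
    rw [this]; ring
  have hLHS : ∑ i ∈ P, p i * (Δz i - T) = (∑ i ∈ P, p i * Δz i) - Qpos * T := by
    rw [hQpos, Finset.sum_mul, ← Finset.sum_sub_distrib]
    apply Finset.sum_congr rfl
    intro i _; ring
  rw [hLHS, hSumP, hTotal, hQneg]
  ring
end

section
/- If the unsampled second moments vanish (U_{pos,2} = U_{neg,2} = 0) and R_w ≤ 0 ≤ R_c, then ΔQ_pos = (η/N)[(R_c - S_R) Q_neg A_2 + (S_R - R_w) Q_pos B_2] ≥ 0. -/
theorem stmt_10 (η N ΔQpos Rc Rw SR Qpos Qneg A2 B2 Upos2 Uneg2 Ppos Pneg : ℝ)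
    (hη : 0 < η) (hNpos : 1 ≤ N)
    (hA2 : 0 ≤ A2) (hB2 : 0 ≤ B2) (hQpos : 0 ≤ Qpos) (hQneg : 0 ≤ Qneg)
    (hQsum : Qpos + Qneg = 1)
    (hP : 0 ≤ Ppos) (hNneg : 0 ≤ Pneg) (hPsum : Ppos + Pneg ≤ 1)
    (hSR : SR = Rc * Ppos + Rw * Pneg) (hRw : Rw ≤ 0) (hRc : 0 ≤ Rc)
    (hdecomp : ΔQpos = η / N * ((Rc - SR) * Qneg * A2 + (SR - Rw) * Qpos * B2
        + SR * (Qpos * Uneg2 - Qneg * Upos2)))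
    (hUpos : Upos2 = 0) (hUneg : Uneg2 = 0) :
    ΔQpos = η / N * ((Rc - SR) * Qneg * A2 + (SR - Rw) * Qpos * B2) ∧ 0 ≤ ΔQpos := by
  subst hUpos hUneg
  have heq : ΔQpos = η / N * ((Rc - SR) * Qneg * A2 + (SR - Rw) * Qpos * B2) := by
    rw [hdecomp]; ring
  have h1 : 0 ≤ Rc - SR := by
    have : SR = Rc * Ppos + Rw * Pneg := hSR
    nlinarith [mul_nonneg hRc hP, mul_nonpos_of_nonpos_of_nonneg hRw hNneg]
  have h2 : 0 ≤ SR - Rw := by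
    nlinarith [mul_nonneg hRc hP, mul_nonpos_of_nonpos_of_nonneg hRw hNneg]
  have hN : 0 < N := lt_of_lt_of_le one_pos hNpos
  refine ⟨heq, ?_⟩
  rw [heq]
  have := mul_nonneg (mul_nonneg h1 hQneg) hA2
  have := mul_nonneg (mul_nonneg h2 hQpos) hB2
  positivity
end
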